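/- Let Λ be a locally convex row-finite k-graph. If Λ is cofinal, then Λ^0 is a maximal tail in Λ. -/

import Mathlib

/-!
Common definitions: higher-rank graphs (`k`-graphs), boundary paths, the
equivalence relation `∼_Λ`, the periodicity group `Per(Λ)`, maximal tails,
hereditary/saturated sets, and (an axiomatization of) the Farthing
desourcification `Λ̄` of a locally convex row-finite `k`-graph `Λ`.
-/

/-- A `k`-graph: a countable small category `Λ` equipped with a degree functor
`d : Λ → ℕ^k` satisfying the factorization property.  Elements of `Path` are
the morphisms ("paths"); the vertices are the identity morphisms (the paths `v`
with `r v = v`, equivalently of degree `0`).  The composition `comp μ ν` is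
only meaningful when `s μ = r ν`. -/
structure KGraph (k : ℕ) where
  Path : Type
  countable_path : Countable Path
  nonempty_path : Nonempty Path
  r : Path → Path
  s : Path → Path
  d : Path → Fin k → ℕ
  comp : Path → Path → Path
  d_r : ∀ μ, d (r μ) = 0
  d_s : ∀ μ, d (s μ) = 0
  r_r : ∀ μ, r (r μ) = r μ
  s_r : ∀ μ, s (r μ) = r μ
  r_s : ∀ μ, r (s μ) = s μ
  s_s : ∀ μ, s (s μ) = s μ
  comp_id : ∀ μ, comp μ (s μ) = μ
  id_comp : ∀ μ, comp (r μ) μ = μ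
  r_comp : ∀ μ ν, s μ = r ν → r (comp μ ν) = r μ
  s_comp : ∀ μ ν, s μ = r ν → s (comp μ ν) = s ν
  d_comp : ∀ μ ν, s μ = r ν → d (comp μ ν) = d μ + d ν
  comp_assoc : ∀ μ ν ρ, s μ = r ν → s ν = r ρ →
    comp (comp μ ν) ρ = comp μ (comp ν ρ)
  factorization : ∀ (lam : Path) (m n : Fin k → ℕ), d lam = m + n →
    ∃! p : Path × Path, d p.1 = m ∧ d p.2 = n ∧ s p.1 = r p.2 ∧ lam = comp p.1 p.2

namespace KGraph

variable {k : ℕ}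

/-- The vertices of a `k`-graph are its identity morphisms. -/
def IsVertex (Λ : KGraph k) (v : Λ.Path) : Prop := Λ.r v = v

/-- `Λ.boundedPaths n` is the set `Λ^{≤ n}`: paths `λ` with `d λ ≤ n` such that
`d(λ)_i < n_i` implies `s(λ)Λ^{e_i} = ∅`. -/
def boundedPaths (Λ : KGraph k) (n : Fin k → ℕ) : Set Λ.Path :=
  {lam | Λ.d lam ≤ n ∧ ∀ i : Fin k, Λ.d lam i < n i →
    ∀ e, Λ.r e = Λ.s lam → Λ.d e ≠ Pi.single i 1}

/-- `Λ` is row-finite if every `vΛ^n` is finite. -/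
def RowFinite (Λ : KGraph k) : Prop :=
  ∀ (v : Λ.Path) (n : Fin k → ℕ), Λ.IsVertex v →
    {lam | Λ.r lam = v ∧ Λ.d lam = n}.Finite

/-- `Λ` is locally convex if for `i ≠ j`, `λ ∈ vΛ^{e_i}` and `μ ∈ vΛ^{e_j}`
one has `s(λ)Λ^{e_j} ≠ ∅` (by symmetry in `i, j` this also gives
`s(μ)Λ^{e_i} ≠ ∅`). -/
def LocallyConvex (Λ : KGraph k) : Prop :=
  ∀ i j : Fin k, i ≠ j → ∀ lam mu : Λ.Path, Λ.r lam = Λ.r mu →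
    Λ.d lam = Pi.single i 1 → Λ.d mu = Pi.single j 1 →
    ∃ lam', Λ.r lam' = Λ.s lam ∧ Λ.d lam' = Pi.single j 1

end KGraph

/-- A boundary path of `Λ`: a degree-preserving functor `x : Ω_{k,m} → Λ`
(`m = deg ∈ (ℕ ∪ {∞})^k`) such that `p ≤ m` and `p_i = m_i` imply
`x(p)Λ^{e_i} = ∅`.  `seg p q` is the path `x(p,q)`, meaningful for
`p ≤ q ≤ deg`; `seg p p` is the vertex `x(p)`. -/
structure BoundaryPath {k : ℕ} (Λ : KGraph k) where
  deg : Fin k → ℕ∞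
  seg : (Fin k → ℕ) → (Fin k → ℕ) → Λ.Path
  seg_d : ∀ p q : Fin k → ℕ, p ≤ q → (∀ i, (q i : ℕ∞) ≤ deg i) →
    Λ.d (seg p q) = q - p
  seg_r : ∀ p q : Fin k → ℕ, p ≤ q → (∀ i, (q i : ℕ∞) ≤ deg i) →
    Λ.r (seg p q) = seg p p
  seg_s : ∀ p q : Fin k → ℕ, p ≤ q → (∀ i, (q i : ℕ∞) ≤ deg i) →
    Λ.s (seg p q) = seg q q
  seg_comp : ∀ p q t : Fin k → ℕ, p ≤ q → q ≤ t → (∀ i, (t i : ℕ∞) ≤ deg i) →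
    Λ.comp (seg p q) (seg q t) = seg p t
  boundary : ∀ p : Fin k → ℕ, (∀ i, (p i : ℕ∞) ≤ deg i) →
    ∀ i : Fin k, (p i : ℕ∞) = deg i →
      ∀ e, Λ.r e = seg p p → Λ.d e ≠ Pi.single i 1

/-- `emin m e` is the coordinatewise minimum `m ∧ e` of `m ∈ ℕ^k` with the
(possibly infinite) degree `e ∈ (ℕ ∪ {∞})^k`, as an element of `ℕ^k`. -/
noncomputable def emin {k : ℕ} (m : Fin k → ℕ) (e : Fin k → ℕ∞) : Fin k → ℕ :=
  fun i => (min ((m i : ℕ∞)) (e i)).toNat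

/-- Equality of boundary paths (of the same degree), as functors. -/
def BPEq {k : ℕ} {Λ : KGraph k} (x y : BoundaryPath Λ) : Prop :=
  x.deg = y.deg ∧ ∀ p q : Fin k → ℕ, p ≤ q → (∀ i, (q i : ℕ∞) ≤ x.deg i) →
    x.seg p q = y.seg p q

/-- `IsExtension Λ lam x y` says that `y = lam · x` is the (unique) boundary
path with `y(0, d lam) = lam` and `y(d lam, d lam + p) = x(0, p)`. -/
def IsExtension {k : ℕ} (Λ : KGraph k) (lam : Λ.Path) (x y : BoundaryPath Λ) :
    Prop :=
  (∀ i, y.deg i = (Λ.d lam i : ℕ∞) + x.deg i) ∧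
  y.seg 0 (Λ.d lam) = lam ∧
  ∀ p : Fin k → ℕ, (∀ i, (p i : ℕ∞) ≤ x.deg i) →
    y.seg (Λ.d lam) (Λ.d lam + p) = x.seg 0 p

/-- The relation `μ ∼_Λ ν`: `s μ = s ν` and `μx = νx` for every boundary path
`x ∈ s(μ)Λ^{≤∞}`. -/
def KGraph.peq {k : ℕ} (Λ : KGraph k) (μ ν : Λ.Path) : Prop :=
  Λ.s μ = Λ.s ν ∧ ∀ x y z : BoundaryPath Λ, x.seg 0 0 = Λ.s μ →
    IsExtension Λ μ x y → IsExtension Λ ν x z → BPEq y z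

/-- `Per(Λ) = {d μ - d ν : μ ∼_Λ ν} ⊆ ℤ^k`. -/
def KGraph.Per {k : ℕ} (Λ : KGraph k) : Set (Fin k → ℤ) :=
  {g | ∃ μ ν : Λ.Path, Λ.peq μ ν ∧ g = fun i => (Λ.d μ i : ℤ) - (Λ.d ν i : ℤ)}

/-- `Λ` is aperiodic if for every vertex `v` there is a boundary path
`x ∈ vΛ^{≤∞}` such that distinct `μ, ν ∈ Λv` have `μx ≠ νx`. -/
def KGraph.Aperiodic {k : ℕ} (Λ : KGraph k) : Prop :=
  ∀ v : Λ.Path, Λ.IsVertex v → ∃ x : BoundaryPath Λ, x.seg 0 0 = v ∧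
    ∀ μ ν : Λ.Path, Λ.s μ = v → Λ.s ν = v → μ ≠ ν →
      ∀ y z : BoundaryPath Λ, IsExtension Λ μ x y → IsExtension Λ ν x z →
        ¬ BPEq y z

/-- A maximal tail: a nonempty set `T` of vertices such that (1) `s λ ∈ T`
implies `r λ ∈ T`; (2) for `v ∈ T` and `n ∈ ℕ^k` there is `λ ∈ vΛ^{≤n}` with
`s λ ∈ T`; (3) any `v, w ∈ T` are connected via `μ ∈ vΛ`, `ν ∈ wΛ` with
`s μ = s ν`. -/
def KGraph.IsMaximalTail {k : ℕ} (Λ : KGraph k) (T : Set Λ.Path) : Prop :=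
  T.Nonempty ∧ (∀ v ∈ T, Λ.IsVertex v) ∧
  (∀ lam : Λ.Path, Λ.s lam ∈ T → Λ.r lam ∈ T) ∧
  (∀ v ∈ T, ∀ n : Fin k → ℕ,
    ∃ lam ∈ Λ.boundedPaths n, Λ.r lam = v ∧ Λ.s lam ∈ T) ∧
  (∀ v ∈ T, ∀ w ∈ T, ∃ μ ν : Λ.Path, Λ.r μ = v ∧ Λ.r ν = w ∧ Λ.s μ = Λ.s ν)

/-- `H_{Per(Λ)}`: the set of vertices `v` such that for all `μ ∈ vΛ` and
`m ∈ ℕ^k` with `d μ - m ∈ Per(Λ)` there exists `ν ∈ vΛ^m` with `μ ∼_Λ ν`. -/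
def KGraph.HPer {k : ℕ} (Λ : KGraph k) : Set Λ.Path :=
  {v | Λ.IsVertex v ∧ ∀ μ : Λ.Path, Λ.r μ = v → ∀ m : Fin k → ℕ,
    (fun i => (Λ.d μ i : ℤ) - (m i : ℤ)) ∈ Λ.Per →
    ∃ ν : Λ.Path, Λ.r ν = v ∧ Λ.d ν = m ∧ Λ.peq μ ν}

/-- A set of vertices `H` is hereditary if `r λ ∈ H` implies `s λ ∈ H`. -/
def KGraph.Hereditary {k : ℕ} (Λ : KGraph k) (H : Set Λ.Path) : Prop :=
  ∀ lam : Λ.Path, Λ.r lam ∈ H → Λ.s lam ∈ H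

/-- A set of vertices `H` is saturated if `s(vΛ^{≤n}) ⊆ H` for some `n ∈ ℕ^k`
implies `v ∈ H`. -/
def KGraph.Saturated {k : ℕ} (Λ : KGraph k) (H : Set Λ.Path) : Prop :=
  ∀ v : Λ.Path, Λ.IsVertex v →
    (∃ n : Fin k → ℕ, ∀ lam ∈ Λ.boundedPaths n, Λ.r lam = v → Λ.s lam ∈ H) →
    v ∈ H

/-- `Σ(H)`: the smallest saturated set containing `H`. -/
def KGraph.SatClosure {k : ℕ} (Λ : KGraph k) (H : Set Λ.Path) : Set Λ.Path :=
  ⋂₀ {S : Set Λ.Path | H ⊆ S ∧ Λ.Saturated S}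

/-- A boundary path `x` is cofinal if every vertex `v` admits `n ≤ d x` with
`vΛx(n) ≠ ∅`. -/
def KGraph.CofinalBP {k : ℕ} (Λ : KGraph k) (x : BoundaryPath Λ) : Prop :=
  ∀ v : Λ.Path, Λ.IsVertex v → ∃ n : Fin k → ℕ,
    (∀ i, (n i : ℕ∞) ≤ x.deg i) ∧ ∃ μ : Λ.Path, Λ.r μ = v ∧ Λ.s μ = x.seg n n

/-- `Λ` is cofinal if all of its boundary paths are cofinal. -/
def KGraph.Cofinal {k : ℕ} (Λ : KGraph k) : Prop :=
  ∀ x : BoundaryPath Λ, Λ.CofinalBP x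

/-- `T(v) = {s μ : μ ∈ vΛ}`, the smallest hereditary set containing `v`. -/
def KGraph.tree {k : ℕ} (Λ : KGraph k) (v : Λ.Path) : Set Λ.Path :=
  {w | ∃ μ : Λ.Path, Λ.r μ = v ∧ Λ.s μ = w}

/-- `Δ(H₁,H₂) = {v ∈ H₁ : T(v) ∩ H₂ = ∅}`. -/
def KGraph.Delta {k : ℕ} (Λ : KGraph k) (H₁ H₂ : Set Λ.Path) : Set Λ.Path :=
  {v ∈ H₁ | Λ.tree v ∩ H₂ = ∅}

/-- `Ω(H₁,H₂) = {v ∈ H₁ \ H₂ : T(v) ∩ H₂ ≠ ∅}`. -/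
def KGraph.Omega {k : ℕ} (Λ : KGraph k) (H₁ H₂ : Set Λ.Path) : Set Λ.Path :=
  {v ∈ H₁ \ H₂ | (Λ.tree v ∩ H₂).Nonempty}

/-- The relation `H₁ ≻ H₂`. -/
def KGraph.Succ {k : ℕ} (Λ : KGraph k) (H₁ H₂ : Set Λ.Path) : Prop :=
  H₂ ⊆ H₁ ∧ (Λ.Delta H₁ H₂).Nonempty ∧
  ∀ v ∈ Λ.Omega H₁ H₂, ∃ n : Fin k → ℕ,
    ∀ lam ∈ Λ.boundedPaths n, Λ.r lam = v → Λ.s lam ∈ H₂ ∪ Λ.Delta H₁ H₂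

/-- `IsGlue Λ x n y p z` says that `z` is the boundary path
`x(0, n ∧ d x) · σ^{p ∧ d y}(y)`. -/
def IsGlue {k : ℕ} (Λ : KGraph k) (x : BoundaryPath Λ) (n : Fin k → ℕ)
    (y : BoundaryPath Λ) (p : Fin k → ℕ) (z : BoundaryPath Λ) : Prop :=
  (∀ i, z.deg i = (emin n x.deg i : ℕ∞) + (y.deg i - (emin p y.deg i : ℕ∞))) ∧
  z.seg 0 (emin n x.deg) = x.seg 0 (emin n x.deg) ∧
  ∀ t : Fin k → ℕ, (∀ i, ((emin p y.deg i + t i : ℕ) : ℕ∞) ≤ y.deg i) →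
    z.seg (emin n x.deg) (emin n x.deg + t) =
      y.seg (emin p y.deg) (emin p y.deg + t)

/-- The Farthing desourcification `Λ̄ = P_Λ/≈` of `Λ`: a `k`-graph `bar`
without sources whose morphisms are the classes `cls x m n = [x;(m,n)]`
(`x ∈ Λ^{≤∞}`, `m ≤ n ∈ ℕ^k`), where `[x;(m,n)] = [y;(p,q)]` iff
(P1) `x(m ∧ d x, n ∧ d x) = y(p ∧ d y, q ∧ d y)`,
(P2) `m - m ∧ d x = p - p ∧ d y` and (P3) `n - m = q - p`; together with the
range, source, degree and composition formulas, the canonical embedding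
`emb : Λ → Λ̄` (`λ ↦ [λx;(0, d λ)]`) and the projection `proj = π : Λ̄ → Λ`,
`π [x;(m,n)] = [x;(m ∧ d x, n ∧ d x)]`. -/
structure Desourcification {k : ℕ} (Λ : KGraph k) where
  bar : KGraph k
  noSources : ∀ v : bar.Path, bar.IsVertex v → ∀ i : Fin k,
    ∃ e, bar.r e = v ∧ bar.d e = Pi.single i 1
  cls : BoundaryPath Λ → (Fin k → ℕ) → (Fin k → ℕ) → bar.Path
  cls_surjective : ∀ μ : bar.Path,
    ∃ (x : BoundaryPath Λ) (m : Fin k → ℕ), μ = cls x m (m + bar.d μ)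
  cls_eq_iff : ∀ (x : BoundaryPath Λ) (m n : Fin k → ℕ) (y : BoundaryPath Λ)
    (p q : Fin k → ℕ), m ≤ n → p ≤ q →
    (cls x m n = cls y p q ↔
      (x.seg (emin m x.deg) (emin n x.deg) =
          y.seg (emin p y.deg) (emin q y.deg) ∧
        m - emin m x.deg = p - emin p y.deg ∧
        n - m = q - p))
  d_cls : ∀ (x : BoundaryPath Λ) (m n : Fin k → ℕ), m ≤ n →
    bar.d (cls x m n) = n - m
  r_cls : ∀ (x : BoundaryPath Λ) (m n : Fin k → ℕ), m ≤ n →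
    bar.r (cls x m n) = cls x m m
  s_cls : ∀ (x : BoundaryPath Λ) (m n : Fin k → ℕ), m ≤ n →
    bar.s (cls x m n) = cls x n n
  comp_cls : ∀ (x y : BoundaryPath Λ) (m n p q : Fin k → ℕ), m ≤ n → p ≤ q →
    bar.s (cls x m n) = bar.r (cls y p q) →
    ∀ z : BoundaryPath Λ, IsGlue Λ x n y p z →
      bar.comp (cls x m n) (cls y p q) = cls z m (n + (q - p))
  emb : Λ.Path → bar.Path
  emb_injective : Function.Injective emb
  emb_r : ∀ lam : Λ.Path, emb (Λ.r lam) = bar.r (emb lam)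
  emb_s : ∀ lam : Λ.Path, emb (Λ.s lam) = bar.s (emb lam)
  emb_d : ∀ lam : Λ.Path, bar.d (emb lam) = Λ.d lam
  emb_comp : ∀ μ ν : Λ.Path, Λ.s μ = Λ.r ν →
    emb (Λ.comp μ ν) = bar.comp (emb μ) (emb ν)
  emb_cls : ∀ (lam : Λ.Path) (x y : BoundaryPath Λ), x.seg 0 0 = Λ.s lam →
    IsExtension Λ lam x y → emb lam = cls y 0 (Λ.d lam)
  proj : bar.Path → Λ.Path
  proj_cls : ∀ (x : BoundaryPath Λ) (m n : Fin k → ℕ), m ≤ n →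
    proj (cls x m n) = x.seg (emin m x.deg) (emin n x.deg)

/-- `IsInfClass D x p z` says that `z` is the infinite path `[x;(p,∞)]` of
`Λ̄`, i.e. `z(m,n) = [x;(p+m, p+n)]`. -/
def IsInfClass {k : ℕ} {Λ : KGraph k} (D : Desourcification Λ)
    (x : BoundaryPath Λ) (p : Fin k → ℕ) (z : BoundaryPath D.bar) : Prop :=
  (∀ i, z.deg i = (⊤ : ℕ∞)) ∧
  ∀ m n : Fin k → ℕ, m ≤ n → z.seg m n = D.cls x (p + m) (p + n)

/-- `IsShift x n y` says that `y = σ^n(x)` is the `n`-shifted boundary path,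
`σ^n(x)(p,q) = x(p+n, q+n)`, of degree `d x - n`. -/
def IsShift {k : ℕ} {Λ : KGraph k} (x : BoundaryPath Λ) (n : Fin k → ℕ)
    (y : BoundaryPath Λ) : Prop :=
  (∀ i, y.deg i = x.deg i - (n i : ℕ∞)) ∧
  ∀ p q : Fin k → ℕ, p ≤ q → (∀ i, (q i : ℕ∞) ≤ y.deg i) →
    y.seg p q = x.seg (p + n) (q + n)

/-!
The vertex conditions and condition (1) are immediate, and condition (2) is a greedy
construction: extend a path by an edge of degree `e_i` for as long as `d(λ)_i < n_i` and such an
edge exists.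

For condition (3), start at the vertex `w` and choose `λ_N ∈ wΛ^{≤(N,…,N)}` so that each
`λ_{N+1}` extends `λ_N` by a path in `Λ^{≤(1,…,1)}`. The union of the `λ_N` is a boundary path
`x` with `x(0) = w`. The boundary condition holds by local convexity: if a path `τ` has
`d(τ)_i = 0` and `s(τ)Λ^{e_i} = ∅`, then `r(τ)Λ^{e_i} = ∅`. Cofinality of `x` then gives
`μ ∈ vΛx(n)`, and `ν = x(0, n)` lies in `wΛx(n)`.
-/

theorem ENat.exists_le_of_natCast_le_iSup {f : ℕ → ℕ} {n : ℕ}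
    (h : (n : ℕ∞) ≤ ⨆ N, (f N : ℕ∞)) : ∃ N, n ≤ f N := by
  rcases n with _ | n
  · exact ⟨0, Nat.zero_le _⟩
  obtain ⟨N, hN⟩ := lt_iSup_iff.1 ((Nat.cast_lt.2 n.lt_succ_self).trans_le h)
  exact ⟨N, Nat.cast_lt.1 hN⟩

namespace KGraph

variable {k : ℕ} (Λ : KGraph k)

/-- `vΛ^{e_i} = ∅`. -/
def NoEdges (v : Λ.Path) (i : Fin k) : Prop :=
  ∀ e, Λ.r e = v → Λ.d e ≠ Pi.single i 1

theorem isVertex_of_d_eq_zero {lam : Λ.Path} (h : Λ.d lam = 0) : Λ.IsVertex lam := by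
  have key := (Λ.factorization lam 0 0 (by simpa using h)).unique
    (y₁ := (Λ.r lam, lam)) (y₂ := (lam, Λ.s lam))
    ⟨Λ.d_r lam, h, Λ.s_r lam, (Λ.id_comp lam).symm⟩
    ⟨h, Λ.d_s lam, (Λ.r_s lam).symm, (Λ.comp_id lam).symm⟩
  exact congrArg Prod.fst key

theorem s_eq_r_of_d_eq_zero {lam : Λ.Path} (h : Λ.d lam = 0) : Λ.s lam = Λ.r lam := by
  have hv : Λ.r lam = lam := Λ.isVertex_of_d_eq_zero h
  rw [← hv, Λ.s_r, Λ.r_r]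

theorem eq_of_comp_eq_comp {α β α' β' : Λ.Path} (hs : Λ.s α = Λ.r β)
    (hs' : Λ.s α' = Λ.r β') (hd : Λ.d α = Λ.d α') (h : Λ.comp α β = Λ.comp α' β') :
    α = α' ∧ β = β' := by
  have hdβ : Λ.d β = Λ.d β' := by
    have hsum := Λ.d_comp α β hs
    rw [h, Λ.d_comp α' β' hs', hd] at hsum
    exact (add_left_cancel hsum).symm
  have key := (Λ.factorization _ _ _ (Λ.d_comp α β hs)).unique
    (y₁ := (α, β)) (y₂ := (α', β')) ⟨rfl, rfl, hs, rfl⟩ ⟨hd.symm, hdβ.symm, hs', h⟩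
  exact Prod.ext_iff.1 key

theorem exists_eq_comp_edge {τ : Λ.Path} {i : Fin k} (hi : 0 < Λ.d τ i) :
    ∃ e τ', Λ.d e = Pi.single i 1 ∧ Λ.s e = Λ.r τ' ∧ τ = Λ.comp e τ' := by
  have hle : Pi.single i 1 ≤ Λ.d τ := by
    intro j
    rcases eq_or_ne j i with rfl | hj
    · simp only [Pi.single_eq_same]
      exact hi
    · simp [Pi.single_eq_of_ne hj]
  obtain ⟨⟨e, τ'⟩, ⟨he, -, hs, hτ⟩, -⟩ :=
    Λ.factorization τ _ _ (add_tsub_cancel_of_le hle).symm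
  exact ⟨e, τ', he, hs, hτ⟩

def IsSegment (lam : Λ.Path) (p q : Fin k → ℕ) (β : Λ.Path) : Prop :=
  ∃ α γ, Λ.d α = p ∧ Λ.d β = q - p ∧ Λ.s α = Λ.r β ∧ Λ.s β = Λ.r γ ∧
    lam = Λ.comp α (Λ.comp β γ)

section Segment

variable {Λ}

theorem IsSegment.unique {lam β β' : Λ.Path} {p q : Fin k → ℕ}
    (h : Λ.IsSegment lam p q β) (h' : Λ.IsSegment lam p q β') : β = β' := by
  obtain ⟨α, γ, hα, hβ, hαβ, hβγ, rfl⟩ := h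
  obtain ⟨α', γ', hα', hβ', hαβ', hβγ', heq⟩ := h'
  have hαβ'' := Λ.eq_of_comp_eq_comp (by rwa [Λ.r_comp _ _ hβγ])
    (by rwa [Λ.r_comp _ _ hβγ']) (hα.trans hα'.symm) heq
  exact (Λ.eq_of_comp_eq_comp hβγ hβγ' (hβ.trans hβ'.symm) hαβ''.2).1

theorem exists_isSegment {lam : Λ.Path} {p q : Fin k → ℕ} (hpq : p ≤ q)
    (hq : q ≤ Λ.d lam) : ∃ β, Λ.IsSegment lam p q β := by
  obtain ⟨⟨α, δ⟩, ⟨hα, hδ, hαδ, hlam⟩, -⟩ :=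
    Λ.factorization lam p _ (add_tsub_cancel_of_le (hpq.trans hq)).symm
  obtain ⟨⟨β, γ⟩, ⟨hβ, -, hβγ, hδβγ⟩, -⟩ := Λ.factorization δ (q - p) (Λ.d lam - q)
    (by rw [hδ, add_comm, tsub_add_tsub_cancel hq hpq])
  subst hδβγ
  exact ⟨β, α, γ, hα, hβ, by rwa [Λ.r_comp _ _ hβγ] at hαδ, hβγ, hlam⟩

theorem IsSegment.r {lam β : Λ.Path} {p q : Fin k → ℕ} (h : Λ.IsSegment lam p q β) :
    Λ.IsSegment lam p p (Λ.r β) := by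
  obtain ⟨α, γ, hα, -, hαβ, hβγ, hlam⟩ := h
  have hr : Λ.r (Λ.comp β γ) = Λ.r β := Λ.r_comp _ _ hβγ
  refine ⟨α, Λ.comp β γ, hα, by simp [Λ.d_r], by rw [Λ.r_r, hαβ], by rw [Λ.s_r, hr],
    ?_⟩
  rw [← hr, Λ.id_comp, hlam]

theorem IsSegment.s {lam β : Λ.Path} {p q : Fin k → ℕ} (hpq : p ≤ q)
    (h : Λ.IsSegment lam p q β) : Λ.IsSegment lam q q (Λ.s β) := by
  obtain ⟨α, γ, hα, hβ, hαβ, hβγ, hlam⟩ := h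
  refine ⟨Λ.comp α β, γ, ?_, by simp [Λ.d_s], by rw [Λ.s_comp _ _ hαβ, Λ.r_s],
    by rw [Λ.s_s, hβγ], ?_⟩
  · rw [Λ.d_comp _ _ hαβ, hα, hβ, add_tsub_cancel_of_le hpq]
  · rw [hβγ, Λ.id_comp, Λ.comp_assoc _ _ _ hαβ hβγ, hlam]

theorem IsSegment.comp_right {lam ρ β : Λ.Path} {p q : Fin k → ℕ} (hρ : Λ.s lam = Λ.r ρ)
    (h : Λ.IsSegment lam p q β) : Λ.IsSegment (Λ.comp lam ρ) p q β := by
  obtain ⟨α, γ, hα, hβ, hαβ, hβγ, rfl⟩ := h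
  have hαβγ : Λ.s α = Λ.r (Λ.comp β γ) := by rw [Λ.r_comp _ _ hβγ, hαβ]
  have hγρ : Λ.s γ = Λ.r ρ := by rwa [Λ.s_comp _ _ hαβγ, Λ.s_comp _ _ hβγ] at hρ
  refine ⟨α, Λ.comp γ ρ, hα, hβ, hαβ, by rw [Λ.r_comp _ _ hγρ, hβγ], ?_⟩
  rw [Λ.comp_assoc _ _ _ hαβγ (by rwa [Λ.s_comp _ _ hβγ]), Λ.comp_assoc _ _ _ hβγ hγρ]

open Classical in
/-- The segment `λ(p, q)`; junk value `λ` unless `p ≤ q ≤ d λ`. -/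
noncomputable def segment (lam : Λ.Path) (p q : Fin k → ℕ) : Λ.Path :=
  if h : ∃ β, Λ.IsSegment lam p q β then h.choose else lam

theorem segment_eq_of_isSegment {lam β : Λ.Path} {p q : Fin k → ℕ}
    (h : Λ.IsSegment lam p q β) : Λ.segment lam p q = β := by
  rw [segment, dif_pos ⟨β, h⟩]
  exact (Exists.choose_spec (⟨β, h⟩ : ∃ β, Λ.IsSegment lam p q β)).unique h

theorem isSegment_segment {lam : Λ.Path} {p q : Fin k → ℕ} (hpq : p ≤ q)
    (hq : q ≤ Λ.d lam) : Λ.IsSegment lam p q (Λ.segment lam p q) := by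
  obtain ⟨β, hβ⟩ := exists_isSegment hpq hq
  rwa [segment_eq_of_isSegment hβ]

variable {lam : Λ.Path} {p q t : Fin k → ℕ}

theorem d_segment (hpq : p ≤ q) (hq : q ≤ Λ.d lam) : Λ.d (Λ.segment lam p q) = q - p := by
  obtain ⟨-, -, -, h, -⟩ := isSegment_segment hpq hq
  exact h

theorem r_segment (hpq : p ≤ q) (hq : q ≤ Λ.d lam) :
    Λ.r (Λ.segment lam p q) = Λ.segment lam p p :=
  (segment_eq_of_isSegment (isSegment_segment hpq hq).r).symm

theorem s_segment (hpq : p ≤ q) (hq : q ≤ Λ.d lam) :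
    Λ.s (Λ.segment lam p q) = Λ.segment lam q q :=
  (segment_eq_of_isSegment ((isSegment_segment hpq hq).s hpq)).symm

theorem segment_comp_segment (hpq : p ≤ q) (hqt : q ≤ t) (ht : t ≤ Λ.d lam) :
    Λ.comp (Λ.segment lam p q) (Λ.segment lam q t) = Λ.segment lam p t := by
  obtain ⟨α, γ, hα, hβ, hαβ, hβγ, hlam⟩ := isSegment_segment (hpq.trans hqt) ht
  obtain ⟨⟨β₁, β₂⟩, ⟨hβ₁, hβ₂, hβ₁β₂, hβ⟩, -⟩ :=
    Λ.factorization (Λ.segment lam p t) (q - p) (t - q)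
      (by rw [hβ, add_comm, tsub_add_tsub_cancel hqt hpq])
  dsimp only at hβ₁ hβ₂ hβ₁β₂ hβ
  rw [hβ] at hαβ hβγ hlam
  have hαβ₁ : Λ.s α = Λ.r β₁ := by rwa [Λ.r_comp _ _ hβ₁β₂] at hαβ
  have hβ₂γ : Λ.s β₂ = Λ.r γ := by rwa [Λ.s_comp _ _ hβ₁β₂] at hβγ
  have hβ₁β₂γ : Λ.s β₁ = Λ.r (Λ.comp β₂ γ) := by rw [Λ.r_comp _ _ hβ₂γ, hβ₁β₂]
  have h₁ : Λ.IsSegment lam p q β₁ :=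
    ⟨α, Λ.comp β₂ γ, hα, hβ₁, hαβ₁, hβ₁β₂γ, by rw [hlam, Λ.comp_assoc _ _ _ hβ₁β₂ hβ₂γ]⟩
  have h₂ : Λ.IsSegment lam q t β₂ := by
    refine ⟨Λ.comp α β₁, γ, ?_, hβ₂, by rw [Λ.s_comp _ _ hαβ₁, hβ₁β₂], hβ₂γ, ?_⟩
    · rw [Λ.d_comp _ _ hαβ₁, hα, hβ₁, add_tsub_cancel_of_le hpq]
    · rw [hlam, Λ.comp_assoc _ _ _ hβ₁β₂ hβ₂γ, Λ.comp_assoc _ _ _ hαβ₁ hβ₁β₂γ]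
  rw [segment_eq_of_isSegment h₁, segment_eq_of_isSegment h₂, hβ]

theorem segment_zero_zero (lam : Λ.Path) : Λ.segment lam 0 0 = Λ.r lam :=
  segment_eq_of_isSegment ⟨Λ.r lam, lam, Λ.d_r lam, by simp [Λ.d_r], by rw [Λ.s_r, Λ.r_r],
    Λ.s_r lam, by rw [Λ.id_comp, Λ.id_comp]⟩

theorem segment_d_d (lam : Λ.Path) : Λ.segment lam (Λ.d lam) (Λ.d lam) = Λ.s lam := by
  have hss : Λ.comp (Λ.s lam) (Λ.s lam) = Λ.s lam := by
    simpa only [Λ.s_s] using Λ.comp_id (Λ.s lam)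
  exact segment_eq_of_isSegment ⟨lam, Λ.s lam, rfl, by simp [Λ.d_s], (Λ.r_s lam).symm,
    by rw [Λ.s_s, Λ.r_s], by rw [hss, Λ.comp_id]⟩

end Segment

theorem exists_mem_boundedPaths_of_d_le {lam : Λ.Path} {n : Fin k → ℕ} (h : Λ.d lam ≤ n) :
    ∃ μ ∈ Λ.boundedPaths n, Λ.r μ = Λ.r lam := by
  by_cases hlam : lam ∈ Λ.boundedPaths n
  · exact ⟨lam, hlam, rfl⟩
  obtain ⟨i, hi, e, he, hde⟩ : ∃ i, Λ.d lam i < n i ∧ ∃ e, Λ.r e = Λ.s lam ∧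
      Λ.d e = Pi.single i 1 := by
    simpa [boundedPaths, h] using hlam
  have hd : Λ.d (Λ.comp lam e) = Λ.d lam + Pi.single i 1 := by rw [Λ.d_comp _ _ he.symm, hde]
  have hle : Λ.d (Λ.comp lam e) ≤ n := by
    intro j
    rcases eq_or_ne j i with rfl | hj
    · simpa [hd] using hi
    · simpa [hd, Pi.single_eq_of_ne hj] using h j
  obtain ⟨μ, hμ, hμr⟩ := exists_mem_boundedPaths_of_d_le hle
  exact ⟨μ, hμ, by rw [hμr, Λ.r_comp _ _ he.symm]⟩
termination_by ∑ i, (n i - Λ.d lam i)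
decreasing_by
  apply Finset.sum_lt_sum
  · intro j _
    simp only [hd, Pi.add_apply]
    omega
  · exact ⟨i, Finset.mem_univ i, by simp only [hd, Pi.add_apply, Pi.single_eq_same]; omega⟩

theorem exists_mem_boundedPaths {v : Λ.Path} (hv : Λ.IsVertex v) (n : Fin k → ℕ) :
    ∃ lam ∈ Λ.boundedPaths n, Λ.r lam = v := by
  have hd : Λ.d v = 0 := by rw [← hv]; exact Λ.d_r v
  have hr : Λ.r v = v := hv
  simpa only [hr] using Λ.exists_mem_boundedPaths_of_d_le (lam := v) (n := n) (by simp [hd])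

theorem comp_mem_boundedPaths_add_one {lam ρ : Λ.Path} {m : Fin k → ℕ}
    (hlam : lam ∈ Λ.boundedPaths m) (hρ : ρ ∈ Λ.boundedPaths 1) (hs : Λ.s lam = Λ.r ρ) :
    Λ.comp lam ρ ∈ Λ.boundedPaths (m + 1) := by
  rw [boundedPaths, Set.mem_ofPred_eq, Λ.d_comp _ _ hs, Λ.s_comp _ _ hs]
  refine ⟨add_le_add hlam.1 hρ.1, fun i hi => ?_⟩
  rcases Nat.lt_or_ge (Λ.d ρ i) 1 with hρi | hρi
  · exact hρ.2 i hρi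
  -- otherwise `ρ` starts with an edge of degree `e_i` at `s λ`, where there is none
  have hlam_i : Λ.d lam i < m i := by simp only [Pi.add_apply, Pi.one_apply] at hi; omega
  obtain ⟨e, τ, he, heτ, rfl⟩ := Λ.exists_eq_comp_edge hρi
  exact absurd he (hlam.2 i hlam_i e (by rw [hs, Λ.r_comp _ _ heτ]))

variable {Λ} in
theorem LocallyConvex.noEdges_r (hlc : Λ.LocallyConvex) {τ : Λ.Path} {i : Fin k}
    (hτ : Λ.d τ i = 0) (hs : Λ.NoEdges (Λ.s τ) i) : Λ.NoEdges (Λ.r τ) i := by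
  by_cases h0 : Λ.d τ = 0
  · rwa [← Λ.s_eq_r_of_d_eq_zero h0]
  obtain ⟨j, hj⟩ : ∃ j, 0 < Λ.d τ j := by
    by_contra! h
    exact h0 (funext fun j => Nat.le_zero.1 (h j))
  have hji : j ≠ i := by rintro rfl; omega
  obtain ⟨f, τ', hf, hfτ', hτf⟩ := Λ.exists_eq_comp_edge hj
  have hd : Λ.d τ = Pi.single j 1 + Λ.d τ' := by rw [hτf, Λ.d_comp _ _ hfτ', hf]
  have hτ' : Λ.d τ' i = 0 := by simpa [hd, Pi.single_eq_of_ne hji.symm] using hτ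
  have ih : Λ.NoEdges (Λ.s f) i :=
    hfτ' ▸ hlc.noEdges_r hτ' (by rwa [hτf, Λ.s_comp _ _ hfτ'] at hs)
  intro e he hde
  obtain ⟨g, hg, hdg⟩ := hlc j i hji f e (by rw [he, hτf, Λ.r_comp _ _ hfτ']) hf hde
  exact ih g hg hdg
termination_by ∑ j, Λ.d τ j
decreasing_by
  simp [hd, Finset.sum_add_distrib, Finset.sum_pi_single']

noncomputable def greedyStep (v : Λ.Path) : Λ.Path :=
  (Λ.exists_mem_boundedPaths (Λ.r_r v) 1).choose

theorem greedyStep_mem (v : Λ.Path) : Λ.greedyStep v ∈ Λ.boundedPaths 1 :=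
  (Λ.exists_mem_boundedPaths (Λ.r_r v) 1).choose_spec.1

theorem r_greedyStep (v : Λ.Path) : Λ.r (Λ.greedyStep v) = Λ.r v :=
  (Λ.exists_mem_boundedPaths (Λ.r_r v) 1).choose_spec.2

noncomputable def greedyPath (w : Λ.Path) : ℕ → Λ.Path
  | 0 => w
  | N + 1 => Λ.comp (greedyPath w N) (Λ.greedyStep (Λ.s (greedyPath w N)))

theorem s_greedyPath (w : Λ.Path) (N : ℕ) :
    Λ.s (Λ.greedyPath w N) = Λ.r (Λ.greedyStep (Λ.s (Λ.greedyPath w N))) := by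
  rw [r_greedyStep, r_s]

theorem greedyPath_mem {w : Λ.Path} (hw : Λ.IsVertex w) (N : ℕ) :
    Λ.greedyPath w N ∈ Λ.boundedPaths (fun _ => N) := by
  induction N with
  | zero =>
    have hd : Λ.d w = 0 := by rw [← hw]; exact Λ.d_r w
    exact ⟨by simp [greedyPath, hd], fun i hi => by simp [greedyPath, hd] at hi⟩
  | succ N ih =>
    exact Λ.comp_mem_boundedPaths_add_one ih (Λ.greedyStep_mem _) (Λ.s_greedyPath w N)

theorem exists_greedyPath_eq_comp (w : Λ.Path) {N M : ℕ} (h : N ≤ M) :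
    ∃ ρ, Λ.s (Λ.greedyPath w N) = Λ.r ρ ∧
      Λ.greedyPath w M = Λ.comp (Λ.greedyPath w N) ρ := by
  induction M, h using Nat.le_induction with
  | base => exact ⟨_, (Λ.r_s _).symm, (Λ.comp_id _).symm⟩
  | succ M _ ih =>
    obtain ⟨ρ, hρ, hM⟩ := ih
    set σ := Λ.greedyStep (Λ.s (Λ.greedyPath w M))
    have hρσ : Λ.s ρ = Λ.r σ := by rw [← Λ.s_greedyPath, hM, Λ.s_comp _ _ hρ]
    refine ⟨Λ.comp ρ σ, by rw [Λ.r_comp _ _ hρσ, hρ], ?_⟩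
    show Λ.comp (Λ.greedyPath w M) σ = _
    rw [hM, Λ.comp_assoc _ _ _ hρ hρσ]

theorem monotone_d_greedyPath (w : Λ.Path) : Monotone fun N => Λ.d (Λ.greedyPath w N) := by
  intro N M h
  obtain ⟨ρ, hρ, hM⟩ := Λ.exists_greedyPath_eq_comp w h
  dsimp only
  rw [hM, Λ.d_comp _ _ hρ]
  exact le_self_add

noncomputable def greedyDeg (w : Λ.Path) (i : Fin k) : ℕ∞ :=
  ⨆ N, (Λ.d (Λ.greedyPath w N) i : ℕ∞)

theorem exists_le_d_greedyPath {w : Λ.Path} {q : Fin k → ℕ}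
    (hq : ∀ i, (q i : ℕ∞) ≤ Λ.greedyDeg w i) : ∃ N, q ≤ Λ.d (Λ.greedyPath w N) := by
  have h : ∀ i, ∀ᶠ N in Filter.atTop, q i ≤ Λ.d (Λ.greedyPath w N) i := fun i => by
    obtain ⟨N, hN⟩ := ENat.exists_le_of_natCast_le_iSup (hq i)
    exact Filter.eventually_atTop.2 ⟨N, fun M hM => hN.trans (Λ.monotone_d_greedyPath w hM i)⟩
  exact (Filter.eventually_all.2 h).exists

open Classical in
noncomputable def greedySeg (w : Λ.Path) (p q : Fin k → ℕ) : Λ.Path :=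
  if h : ∃ N, q ≤ Λ.d (Λ.greedyPath w N) then Λ.segment (Λ.greedyPath w h.choose) p q else w

variable {Λ}

theorem segment_greedyPath_eq {w : Λ.Path} {p q : Fin k → ℕ} (hpq : p ≤ q) {N M : ℕ}
    (hN : q ≤ Λ.d (Λ.greedyPath w N)) (hM : q ≤ Λ.d (Λ.greedyPath w M)) :
    Λ.segment (Λ.greedyPath w N) p q = Λ.segment (Λ.greedyPath w M) p q := by
  wlog h : N ≤ M generalizing N M
  · exact (this hM hN (le_of_not_ge h)).symm
  obtain ⟨ρ, hρ, hMρ⟩ := Λ.exists_greedyPath_eq_comp w h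
  rw [hMρ, segment_eq_of_isSegment ((isSegment_segment hpq hN).comp_right hρ)]

theorem greedySeg_eq {w : Λ.Path} {p q : Fin k → ℕ} (hpq : p ≤ q) {N : ℕ}
    (hN : q ≤ Λ.d (Λ.greedyPath w N)) :
    Λ.greedySeg w p q = Λ.segment (Λ.greedyPath w N) p q := by
  rw [greedySeg, dif_pos ⟨N, hN⟩]
  exact segment_greedyPath_eq hpq
    (Exists.choose_spec (⟨N, hN⟩ : ∃ N, q ≤ Λ.d (Λ.greedyPath w N))) hN

theorem greedySeg_noEdges (hlc : Λ.LocallyConvex) {w : Λ.Path} (hw : Λ.IsVertex w)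
    {p : Fin k → ℕ} (hp : ∀ i, (p i : ℕ∞) ≤ Λ.greedyDeg w i) {i : Fin k}
    (hpi : (p i : ℕ∞) = Λ.greedyDeg w i) : Λ.NoEdges (Λ.greedySeg w p p) i := by
  obtain ⟨N₀, hN₀⟩ := Λ.exists_le_d_greedyPath hp
  set N := max N₀ (p i + 1)
  set lam := Λ.greedyPath w N
  have hp_lam : p ≤ Λ.d lam := hN₀.trans (Λ.monotone_d_greedyPath w (le_max_left _ _))
  have hdi : Λ.d lam i = p i := by
    have hle : (Λ.d lam i : ℕ∞) ≤ Λ.greedyDeg w i :=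
      le_iSup (fun N => (Λ.d (Λ.greedyPath w N) i : ℕ∞)) N
    rw [← hpi] at hle
    exact le_antisymm (by exact_mod_cast hle) (hp_lam i)
  have hN : p i + 1 ≤ N := le_max_right _ _
  have hs : Λ.NoEdges (Λ.s lam) i :=
    (Λ.greedyPath_mem hw N).2 i (by show Λ.d lam i < N; omega)
  have hτ := hlc.noEdges_r (τ := Λ.segment lam p (Λ.d lam)) (i := i)
    (by rw [d_segment hp_lam le_rfl, Pi.sub_apply, hdi, Nat.sub_self])
    (by rwa [s_segment hp_lam le_rfl, segment_d_d])
  rwa [r_segment hp_lam le_rfl, ← greedySeg_eq le_rfl hp_lam] at hτ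

theorem exists_boundaryPath (hlc : Λ.LocallyConvex) {w : Λ.Path} (hw : Λ.IsVertex w) :
    ∃ x : BoundaryPath Λ, x.seg 0 0 = w := by
  refine ⟨
    { deg := Λ.greedyDeg w
      seg := Λ.greedySeg w
      seg_d := fun p q hpq hq => ?_
      seg_r := fun p q hpq hq => ?_
      seg_s := fun p q hpq hq => ?_
      seg_comp := fun p q t hpq hqt ht => ?_
      boundary := fun p hp i hpi => greedySeg_noEdges hlc hw hp hpi }, ?_⟩
  · obtain ⟨N, hN⟩ := Λ.exists_le_d_greedyPath hq
    rw [greedySeg_eq hpq hN, d_segment hpq hN]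
  · obtain ⟨N, hN⟩ := Λ.exists_le_d_greedyPath hq
    rw [greedySeg_eq hpq hN, greedySeg_eq le_rfl (hpq.trans hN), r_segment hpq hN]
  · obtain ⟨N, hN⟩ := Λ.exists_le_d_greedyPath hq
    rw [greedySeg_eq hpq hN, greedySeg_eq le_rfl hN, s_segment hpq hN]
  · obtain ⟨N, hN⟩ := Λ.exists_le_d_greedyPath ht
    rw [greedySeg_eq hpq (hqt.trans hN), greedySeg_eq hqt hN, greedySeg_eq (hpq.trans hqt) hN,
      segment_comp_segment hpq hqt hN]
  · show Λ.greedySeg w 0 0 = w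
    rw [greedySeg_eq le_rfl (N := 0) zero_le, segment_zero_zero]
    exact hw

end KGraph

theorem statement13_general {k : ℕ} (Λ : KGraph k) (hlc : Λ.LocallyConvex)
    (hcof : Λ.Cofinal) :
    Λ.IsMaximalTail {v | Λ.IsVertex v} := by
  obtain ⟨μ⟩ := Λ.nonempty_path
  refine ⟨⟨Λ.r μ, Λ.r_r μ⟩, fun v hv => hv, fun lam _ => Λ.r_r lam, ?_, ?_⟩
  · intro v hv n
    obtain ⟨lam, hlam, hr⟩ := Λ.exists_mem_boundedPaths hv n
    exact ⟨lam, hlam, hr, Λ.r_s lam⟩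
  · intro v hv w hw
    obtain ⟨x, hx⟩ := Λ.exists_boundaryPath hlc hw
    obtain ⟨n, hn, μ, hμ, hμx⟩ := hcof x v hv
    exact ⟨μ, x.seg 0 n, hμ, by rw [x.seg_r 0 n zero_le hn, hx],
      by rw [x.seg_s 0 n zero_le hn, hμx]⟩

/-- from the proof of the Corollary in Section 5: If a
locally convex row-finite `k`-graph `Λ` is cofinal, then `Λ^0` is a maximal
tail in `Λ`. -/
theorem statement13 {k : ℕ} (Λ : KGraph k) (hlc : Λ.LocallyConvex)
    (hrf : Λ.RowFinite) (hcof : Λ.Cofinal) :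
    Λ.IsMaximalTail {v | Λ.IsVertex v} :=
  statement13_general Λ hlc hcof
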